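/- arXiv:1102.4475 — 4 statements merged into one kernel-verified Lean document; each statement's English description precedes it below -/
import Mathlib

section
/- For even n = dim V and the spin representation c_ζ of Cl(V_ℂ, ζβ) on S = ℂ^{N|N}, the supertrace satisfies STr(e^{inπ/4} c_ζ(γ)) = (2ζ)^{n/2}, where γ = a_1⋯a_n is the product of an oriented orthonormal basis, and STr(c_ζ(a_I)) = 0 for every proper subset I ⊊ {1,…,n}. -/
noncomputable section

/-- The 2×2 matrix `c_ζ(a_1) = [[0,ζ],[1,0]]`. -/
def matA (ζ : ℂ) : Matrix (Fin 2) (Fin 2) ℂ := !![0, ζ; 1, 0]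

/-- The 2×2 matrix `c_ζ(a_2) = [[0,iζ],[−i,0]]`. -/
def matB (ζ : ℂ) : Matrix (Fin 2) (Fin 2) ℂ := !![0, Complex.I * ζ; -Complex.I, 0]

/-- The 2×2 chirality sign `diag(1,−1)` used to form graded tensor products. -/
def matK : Matrix (Fin 2) (Fin 2) ℂ := !![1, 0; 0, -1]

/-- The spin module `S = (ℂ²)^{⊗k}`, with index set `Fin k → Fin 2`; a basis index is
even or odd according to the parity of the number of `1` entries. -/
abbrev SpinIx (k : ℕ) := Fin k → Fin 2

/-- The spin representation of the generators: `c_ζ(a_i)` is the (graded) tensor product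
`K ⊗ ⋯ ⊗ K ⊗ M ⊗ 1 ⊗ ⋯ ⊗ 1` with `M = A` (resp. `M = B`) in slot `i/2` when `i` is even
(resp. odd), written entrywise. -/
def cGen (k : ℕ) (ζ : ℂ) (i : Fin (2 * k)) : Matrix (SpinIx k) (SpinIx k) ℂ :=
  Matrix.of fun s t => ∏ m : Fin k,
    if (m : ℕ) < (i : ℕ) / 2 then matK (s m) (t m)
    else if (m : ℕ) = (i : ℕ) / 2 then
      (if (i : ℕ) % 2 = 0 then matA ζ else matB ζ) (s m) (t m)
    else (1 : Matrix (Fin 2) (Fin 2) ℂ) (s m) (t m)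

/-- The linear extension of the spin representation to `V_ℂ`. -/
def cVec (k : ℕ) (ζ : ℂ) (v : Fin (2 * k) → ℂ) : Matrix (SpinIx k) (SpinIx k) ℂ :=
  ∑ i, v i • cGen k ζ i

/-- The ordered products `c_ζ(a_I) = c_ζ(a_{i_1}) ⋯ c_ζ(a_{i_k})`, `I = {i_1 < … < i_k}`. -/
def cProd (k : ℕ) (ζ : ℂ) (I : Finset (Fin (2 * k))) : Matrix (SpinIx k) (SpinIx k) ℂ :=
  ((I.sort (· ≤ ·)).map (cGen k ζ)).prod

/-- The supertrace on `End(S)`, `S = ℂ^{N|N}`. -/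
def strace (k : ℕ) (M : Matrix (SpinIx k) (SpinIx k) ℂ) : ℂ :=
  ∑ s : SpinIx k, (-1 : ℂ) ^ (∑ m, ((s m : ℕ))) * M s s

/-! The generator `c_ζ(a_i)` is a tensor product over the `k` slots of `ℂ²`, so `c_ζ(a_I)` is
the slotwise tensor product of ordered products of `2 × 2` matrices, and the supertrace of a
tensor product is the product of the `2 × 2` supertraces `P₀₀ - P₁₁`. In slot `m` the ordered
product is `(A if 2m ∈ I) (B if 2m+1 ∈ I) K^c`, where `c` counts the indices of `I` beyond the
slot. The supertraces of `1`, `A`, `B` vanish and that of `AB` is `-2iζ`.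
For `I` the whole index set every `c` is even, so the supertrace is `(-2iζ)^k`, and
`e^{ikπ/2} = i^k` turns this into `(2ζ)^k`. For a proper subset `I`, in the slot of the largest
missing index all later indices are present, so `c` is even there and the slot contributes `0`. -/

open Finset Matrix

namespace Matrix

variable {ι κ R : Type*} [Fintype ι] [DecidableEq ι] [Fintype κ] [DecidableEq κ] [CommSemiring R]

def piKronecker : (ι → Matrix κ κ R) →* Matrix (ι → κ) (ι → κ) R where
  toFun F := of fun s t => ∏ m, F m (s m) (t m)
  map_one' := by
    ext s t
    simp only [of_apply, Pi.one_apply, one_apply, prod_ite_zero, prod_const_one, mem_univ,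
      forall_const, funext_iff]
  map_mul' F G := by
    ext s t
    simp only [of_apply, Pi.mul_apply, mul_apply, Fintype.prod_sum, prod_mul_distrib]

@[simp]
theorem piKronecker_apply (F : ι → Matrix κ κ R) (s t : ι → κ) :
    piKronecker F s t = ∏ m, F m (s m) (t m) := rfl

end Matrix

def strace₂ (P : Matrix (Fin 2) (Fin 2) ℂ) : ℂ := P 0 0 - P 1 1

theorem strace_smul (k : ℕ) (c : ℂ) (M : Matrix (SpinIx k) (SpinIx k) ℂ) :
    strace k (c • M) = c * strace k M := by
  simp only [strace, Matrix.smul_apply, smul_eq_mul, mul_sum]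
  exact sum_congr rfl fun s _ => by ring

theorem strace_piKronecker {k : ℕ} (F : Fin k → Matrix (Fin 2) (Fin 2) ℂ) :
    strace k (piKronecker F) = ∏ m, strace₂ (F m) := by
  calc strace k (piKronecker F)
      = ∑ s : SpinIx k, ∏ m, (-1 : ℂ) ^ (s m : ℕ) * F m (s m) (s m) := by
        simp only [strace, piKronecker_apply, prod_mul_distrib, prod_pow_eq_pow_sum]
    _ = ∏ m, ∑ x : Fin 2, (-1 : ℂ) ^ (x : ℕ) * F m x x :=
        (Fintype.prod_sum fun m (x : Fin 2) => (-1 : ℂ) ^ (x : ℕ) * F m x x).symm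
    _ = ∏ m, strace₂ (F m) := by simp [strace₂, Fin.sum_univ_two, sub_eq_add_neg]

theorem exp_I_mul_two_mul_pi_div_four (k : ℕ) :
    Complex.exp (Complex.I * (2 * k : ℂ) * (Real.pi : ℂ) / 4) = Complex.I ^ k := by
  rw [show Complex.I * (2 * k : ℂ) * Real.pi / 4 = k * (Real.pi / 2 * Complex.I) by ring,
    Complex.exp_nat_mul, Complex.exp_pi_div_two_mul_I]

def slotFactor (ζ : ℂ) (m i : ℕ) : Matrix (Fin 2) (Fin 2) ℂ :=
  if m < i / 2 then matK else if m = i / 2 then (if i % 2 = 0 then matA ζ else matB ζ) else 1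

theorem cGen_eq_piKronecker (k : ℕ) (ζ : ℂ) (i : Fin (2 * k)) :
    cGen k ζ i = piKronecker fun m : Fin k => slotFactor ζ m i := by
  ext s t
  simp only [cGen, of_apply, piKronecker_apply, slotFactor]
  refine prod_congr rfl fun m _ => ?_
  split_ifs <;> rfl

section slotFactor

variable (ζ : ℂ) {m i : ℕ}

theorem slotFactor_of_lt (h : i < 2 * m) : slotFactor ζ m i = 1 := by
  unfold slotFactor; split_ifs <;> first | rfl | omega

theorem slotFactor_two_mul : slotFactor ζ m (2 * m) = matA ζ := by
  unfold slotFactor; split_ifs <;> first | rfl | omega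

theorem slotFactor_two_mul_add_one : slotFactor ζ m (2 * m + 1) = matB ζ := by
  unfold slotFactor; split_ifs <;> first | rfl | omega

theorem slotFactor_of_le (h : 2 * m + 2 ≤ i) : slotFactor ζ m i = matK := by
  unfold slotFactor; split_ifs <;> first | rfl | omega

theorem list_prod_map_slotFactor {L : List ℕ} (hL : L.Pairwise (· < ·)) :
    (L.map (slotFactor ζ m)).prod =
      (if 2 * m ∈ L then matA ζ else 1) * (if 2 * m + 1 ∈ L then matB ζ else 1) *
        matK ^ L.countP (2 * m + 2 ≤ ·) := by
  induction L with
  | nil => simp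
  | cons i L ih =>
    obtain ⟨hlt, hL'⟩ := List.pairwise_cons.mp hL
    have notMem {j : ℕ} (hj : j ≤ i) : j ∉ L := fun h => (hlt j h).not_ge hj
    rcases (by omega : i < 2 * m ∨ i = 2 * m ∨ i = 2 * m + 1 ∨ 2 * m + 2 ≤ i)
      with h | rfl | rfl | h
    · rw [List.map_cons, List.prod_cons, slotFactor_of_lt ζ h, one_mul, ih hL']
      grind
    · rw [List.map_cons, List.prod_cons, slotFactor_two_mul, ih hL']
      grind
    · rw [List.map_cons, List.prod_cons, slotFactor_two_mul_add_one, ih hL']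
      grind
    · rw [List.map_cons, List.prod_cons, slotFactor_of_le ζ h, ih hL',
        List.countP_cons_of_pos (by simpa using h), pow_succ']
      grind

end slotFactor

theorem prod_sort_map_slotFactor (ζ : ℂ) (m : ℕ) (J : Finset ℕ) :
    ((J.sort (· ≤ ·)).map (slotFactor ζ m)).prod =
      (if 2 * m ∈ J then matA ζ else 1) * (if 2 * m + 1 ∈ J then matB ζ else 1) *
        matK ^ #{j ∈ J | 2 * m + 2 ≤ j} := by
  rw [list_prod_map_slotFactor ζ (J.sortedLT_sort).pairwise]
  simp only [mem_sort]
  congr 2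
  rw [← Multiset.coe_countP, sort_eq, Multiset.countP_eq_card_filter]
  rfl

theorem matK_pow_of_even {c : ℕ} (h : Even c) : matK ^ c = 1 := by
  obtain ⟨c, rfl⟩ := h
  rw [← two_mul, pow_mul, sq, show matK * matK = 1 by
    ext i j; fin_cases i <;> fin_cases j <;> simp [matK], one_pow]

theorem strace₂_ite_matA_mul_ite_matB (ζ : ℂ) (a b : Prop) [Decidable a] [Decidable b] :
    strace₂ ((if a then matA ζ else 1) * (if b then matB ζ else 1)) =
      if a ∧ b then -2 * Complex.I * ζ else 0 := by
  split_ifs <;> simp_all [strace₂, matA, matB]; ring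

theorem strace₂_prod_sort_map_slotFactor (ζ : ℂ) {n m : ℕ} {J : Finset ℕ}
    (hJ : J ⊆ Iio (2 * n)) (htail : Ico (2 * m + 2) (2 * n) ⊆ J) :
    strace₂ ((J.sort (· ≤ ·)).map (slotFactor ζ m)).prod =
      if 2 * m ∈ J ∧ 2 * m + 1 ∈ J then -2 * Complex.I * ζ else 0 := by
  have htail_eq : {j ∈ J | 2 * m + 2 ≤ j} = Ico (2 * m + 2) (2 * n) := by
    ext j
    simp only [mem_filter, mem_Ico]
    exact ⟨fun h => ⟨h.2, mem_Iio.mp (hJ h.1)⟩, fun h => ⟨htail (mem_Ico.mpr h), h.1⟩⟩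
  rw [prod_sort_map_slotFactor, htail_eq, Nat.card_Ico,
    matK_pow_of_even ⟨n - m - 1, by omega⟩, mul_one, strace₂_ite_matA_mul_ite_matB]

theorem strace_cProd (k : ℕ) (ζ : ℂ) (I : Finset (Fin (2 * k))) :
    strace k (cProd k ζ I) = ∏ m : Fin k,
      strace₂ ((((I.map Fin.valEmbedding).sort (· ≤ ·)).map (slotFactor ζ m)).prod) := by
  have hsort : (I.sort (· ≤ ·)).map Fin.val = (I.map Fin.valEmbedding).sort (· ≤ ·) :=
    map_sort Fin.valEmbedding I (· ≤ ·) (· ≤ ·) fun _ _ _ _ => Iff.rfl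
  have hgen : cGen k ζ = piKronecker ∘ fun (i : Fin (2 * k)) (m : Fin k) => slotFactor ζ m i :=
    funext (cGen_eq_piKronecker k ζ)
  rw [cProd, hgen, ← List.map_map, ← map_list_prod, strace_piKronecker]
  refine prod_congr rfl fun m _ => ?_
  rw [Pi.list_prod_apply, List.map_map, ← hsort, List.map_map]
  rfl

theorem exists_incomplete_pair_of_ssubset {k : ℕ} {J : Finset ℕ} (hJ : J ⊂ Iio (2 * k)) :
    ∃ m < k, ¬(2 * m ∈ J ∧ 2 * m + 1 ∈ J) ∧ Ico (2 * m + 2) (2 * k) ⊆ J := by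
  have hgap : (Iio (2 * k) \ J).Nonempty := sdiff_nonempty.mpr (not_subset_of_ssubset hJ)
  have hmax := mem_sdiff.mp ((Iio (2 * k) \ J).max'_mem hgap)
  set i := (Iio (2 * k) \ J).max' hgap
  rw [mem_Iio] at hmax
  refine ⟨i / 2, by omega, fun h => hmax.2 ?_, fun j hj => ?_⟩
  · obtain hi | hi : i = 2 * (i / 2) ∨ i = 2 * (i / 2) + 1 := by omega
    · exact hi ▸ h.1
    · exact hi ▸ h.2
  · by_contra hjJ
    have := le_max' _ j (mem_sdiff.mpr ⟨mem_Iio.mpr (mem_Ico.mp hj).2, hjJ⟩)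
    have := (mem_Ico.mp hj).1
    omega

theorem strace_cProd_univ (k : ℕ) (ζ : ℂ) :
    strace k (cProd k ζ univ) = (-2 * Complex.I * ζ) ^ k := by
  rw [strace_cProd, Fin.map_valEmbedding_univ]
  calc ∏ m : Fin k, strace₂ (((Iio (2 * k)).sort (· ≤ ·)).map (slotFactor ζ m)).prod
      = ∏ _m : Fin k, -2 * Complex.I * ζ := prod_congr rfl fun m _ => by
        rw [strace₂_prod_sort_map_slotFactor ζ subset_rfl Ico_subset_Iio_self,
          if_pos (by simp only [mem_Iio]; omega)]
    _ = (-2 * Complex.I * ζ) ^ k := by simp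

theorem strace_cProd_of_ne_univ {k : ℕ} (ζ : ℂ) {I : Finset (Fin (2 * k))} (hI : I ≠ univ) :
    strace k (cProd k ζ I) = 0 := by
  have hJ : I.map Fin.valEmbedding ⊂ Iio (2 * k) := by
    rw [← Fin.map_valEmbedding_univ]
    exact map_ssubset_map.mpr (ssubset_univ_iff.mpr hI)
  obtain ⟨m, hm, hpair, htail⟩ := exists_incomplete_pair_of_ssubset hJ
  rw [strace_cProd]
  refine prod_eq_zero (mem_univ ⟨m, hm⟩) ?_
  rw [strace₂_prod_sort_map_slotFactor ζ hJ.subset htail, if_neg hpair]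

theorem spin_supertrace_general (k : ℕ) (ζ : ℂ) :
    strace k (Complex.exp (Complex.I * (2 * k : ℂ) * (Real.pi : ℂ) / 4) •
        cProd k ζ Finset.univ) = (2 * ζ) ^ k ∧
      ∀ I : Finset (Fin (2 * k)), I ≠ Finset.univ → strace k (cProd k ζ I) = 0 := by
  refine ⟨?_, fun I hI => strace_cProd_of_ne_univ ζ hI⟩
  rw [strace_smul, exp_I_mul_two_mul_pi_div_four, strace_cProd_univ, ← mul_pow]
  congr 1
  linear_combination (-2 * ζ) * Complex.I_sq

/-- For even `n = dim V = 2k` and the spin representation `c_ζ` of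
`Cl(V_ℂ, ζβ)` on `S = ℂ^{N|N}` (`N = 2^{k−1}`), the supertrace satisfies
`STr(e^{inπ/4} c_ζ(γ)) = (2ζ)^{n/2}` for `γ = a_1 ⋯ a_n` the product of the oriented
orthonormal basis, and `STr(c_ζ(a_I)) = 0` for every proper subset `I ⊊ {1,…,n}`. -/
theorem spin_supertrace (k : ℕ) (ζ : ℂ) (hζ : ζ ≠ 0) :
    strace k (Complex.exp (Complex.I * (2 * k : ℂ) * (Real.pi : ℂ) / 4) •
        cProd k ζ Finset.univ) = (2 * ζ) ^ k ∧
      ∀ I : Finset (Fin (2 * k)), I ≠ Finset.univ → strace k (cProd k ζ I) = 0 :=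
  spin_supertrace_general k ζ
end
end

section
/- The Fourier transform of a compactly supported smooth superfunction F on HC, defined by F̂(ζ) = ∫_HC F·π_{−ζ} with values in H = End(S), is given in components by F̂(ζ) = Σ_i (F(γ_i^{(1)}))^∧(ζ) · dπ_{−ζ}(γ_i^{(2)}), where (·)^∧ denotes the classical Fourier transform on ℝ; in particular F̂ extends to an entire H-valued function on ℂ. -/
noncomputable section

open CliffordAlgebra

def Qhc (n : ℕ) : QuadraticForm (Polynomial ℝ) (Fin n → Polynomial ℝ) :=
  (Polynomial.X : Polynomial ℝ) • ∑ i : Fin n, (QuadraticMap.sq (R := Polynomial ℝ)).comp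
    (LinearMap.proj (R := Polynomial ℝ) (φ := fun _ : Fin n => Polynomial ℝ) i)

abbrev UHC (n : ℕ) := CliffordAlgebra (Qhc n)

def zU (n : ℕ) : UHC n := algebraMap (Polynomial ℝ) (UHC n) Polynomial.X

def aU (n : ℕ) (i : Fin n) : UHC n := ι (Qhc n) (Pi.single i 1)

def aProd (n : ℕ) (I : Finset (Fin n)) : UHC n :=
  ((I.sort (· ≤ ·)).map (aU n)).prod

def gammaU (n : ℕ) : UHC n := aProd n Finset.univ

/-! ## Smooth superfunctions on the Heisenberg–Clifford supergroup, in coordinates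

A smooth superfunction `F ∈ C^∞(HC) ≅ C^∞(ℝ) ⊗ Λ V*` is encoded by its coordinate
components `F I = F(a_I) : ℝ → ℂ` for `I ⊆ {1,…,n}`; the value of `F` on a general PBW
basis vector is `F(z^j a_I) = (−1)^j (F I)^{(j)}`. -/

/-- Superfunctions on `HC` in coordinates. -/
abbrev SF (n : ℕ) := Finset (Fin n) → ℝ → ℂ

/-- Smoothness of a superfunction: all components are smooth. -/
def SFSmooth {n : ℕ} (F : SF n) : Prop := ∀ I, ContDiff ℝ (⊤ : ℕ∞) (F I)

/-- Compact support of a superfunction: all components have compact support. -/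
def SFCompact {n : ℕ} (F : SF n) : Prop := ∀ I, HasCompactSupport (F I)

/-- `F` is homogeneous of parity `p`. -/
def SFHomog {n : ℕ} (F : SF n) (p : ℕ) : Prop := ∀ I, ¬ I.card % 2 = p % 2 → F I = 0

/-- The number of inversions between two sets of indices: pairs `(i,j) ∈ I × J`
with `j < i`. -/
def invCount {n : ℕ} (I J : Finset (Fin n)) : ℕ :=
  ((I ×ˢ J).filter fun p => p.2 < p.1).card

/-- The sign `sgn(σ_I)` of the shuffle permutation sorting `(I, Iᶜ)`,
`sgn σ_I = (−1)^{∑_{i∈I} i + (#I choose 2)}` (0-indexed). -/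
def sgnSigma {n : ℕ} (I : Finset (Fin n)) : ℤ :=
  (-1) ^ (∑ i ∈ I, (i : ℕ) + (I.card).choose 2)

/-- The sign occurring in the component formula for the supercommutative product of two
(scalar-valued) superfunctions: the shuffle sign of `Δ(a_K)` together with the Koszul
evaluation sign `(−1)^{|a_I||a_J|}`. -/
def gsignP {n : ℕ} (I J : Finset (Fin n)) : ℂ :=
  (-1) ^ (invCount I J + I.card * J.card)

/-- The supercommutative product `F · G = μ ∘ (F ⊗ G) ∘ Δ` of scalar superfunctions,
in components. -/
def sfMul {n : ℕ} (F G : SF n) : SF n := fun K x =>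
  ∑ I ∈ K.powerset, gsignP I (K \ I) * F I x * G (K \ I) x

/-- The invariant (Berezin) integral `∫_HC F = ∫_ℝ F(γ; x) dx`. -/
def sfInt {n : ℕ} (F : SF n) : ℂ := ∫ x : ℝ, F Finset.univ x

/-- The invariant pairing `⟨F, G⟩ = ∫_HC F · G`. -/
def sfPair {n : ℕ} (F G : SF n) : ℂ := sfInt (sfMul F G)

/-- The translation part `L_{x₀}` of the left regular action. -/
def sfTranslate {n : ℕ} (x0 : ℝ) (F : SF n) : SF n := fun I x => F I (x - x0)

/-- The pullback `i* F` along the inversion morphism, `(i*F)(u; x) = F(S(u); −x)`;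
in components `(i*F)(a_I; x) = (−1)^{#I} F(a_I; −x)`. -/
def istar {n : ℕ} (F : SF n) : SF n := fun I x => (-1 : ℂ) ^ I.card * F I (-x)

/-- Characterization of the left regular action `u ↦ L_u` of `U(hc)` on `C^∞(HC)`:
`(L_u F)(v; y) = (−1)^{|u||F|} F(S(u)v; y)`.  It is the unique family of linear maps
which is a unital multiplicative action of `U(hc)`, with `L_z` acting as `d/dx` on all
components and the generators `a_j` acting by the super-derivation formula below. -/
structure IsLeftReg (n : ℕ) (L : UHC n → SF n → SF n) : Prop where
  addu : ∀ u v F, L (u + v) F = L u F + L v F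
  smulu : ∀ (r : ℝ) u F, L ((Polynomial.C r : Polynomial ℝ) • u) F = fun I x => r * L u F I x
  addF : ∀ u F G, L u (F + G) = L u F + L u G
  one : ∀ F, L 1 F = F
  mul : ∀ u v F, L (u * v) F = L u (L v F)
  zgen : ∀ F I, (L (zU n) F) I = deriv (F I)
  agen : ∀ (j : Fin n) (F : SF n) (p : ℕ), SFHomog F p → ∀ I x,
    (L (aU n j) F) I x = (-1 : ℂ) ^ (p + 1) * (-1) ^ (invCount {j} I) *
      (if j ∈ I then -(deriv (F (I.erase j)) x) else F (insert j I) x)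

/-- Characterization of the antipode `S` of the super Hopf algebra `U(hc)`: the unique
linear map with `S(1) = 1` and `S(u x) = (−1)^{|u||x|} S(x) S(u) = (−1)^{|u|+1} x S(u)`
for `x ∈ V` odd and `u` homogeneous (so `S(v) = −v` on `hc`). -/
structure IsAntipode (n : ℕ) (S : UHC n → UHC n) : Prop where
  add : ∀ u v, S (u + v) = S u + S v
  smul : ∀ (p : Polynomial ℝ) u, S (p • u) = p • S u
  one : S 1 = 1
  gen : ∀ (p : ZMod 2) (u : UHC n), u ∈ evenOdd (Qhc n) p → ∀ v : Fin n → Polynomial ℝ,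
    S (u * ι (Qhc n) v) = ((-1 : ℤ) ^ (p.val + 1)) • (ι (Qhc n) v * S u)

/-- Characterization of the evaluation `F(u)` of a superfunction `F` on a general
element `u ∈ U(hc)` (i.e. of `F` as an element of `Hom_{ℝz}(U(hc), C^∞(ℝ))`):
linear in `u`, with `F(a_I) = F I` and `F(z u) = −(d/dx) F(u)`. -/
structure IsEval (n : ℕ) (ev : SF n → UHC n → ℝ → ℂ) : Prop where
  basis : ∀ F I, ev F (aProd n I) = F I
  zmul : ∀ F u, ev F (zU n * u) = fun x => -(deriv (ev F u) x)
  addu : ∀ F u v, ev F (u + v) = fun x => ev F u x + ev F v x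
  smulu : ∀ F (r : ℝ) u, ev F ((Polynomial.C r : Polynomial ℝ) • u) = fun x => r * ev F u x

/-- Classical convolution on the real line. -/
def cConv (f g : ℝ → ℂ) : ℝ → ℂ := fun x => ∫ y : ℝ, f y * g (x - y)

/-- The convolution product of superfunctions on `HC` (with `G` homogeneous of parity
`pG`): `(F ∗ G)(u; x) = (−1)^{|u|(|G| + |γ|)} ⟨F, L_{u;x} i*G⟩`, in components. -/
def convL {n : ℕ} (L : UHC n → SF n → SF n) (pG : ℕ) (F G : SF n) : SF n := fun I x =>
  (-1 : ℂ) ^ (I.card * (pG + n)) * sfPair F (L (aProd n I) (sfTranslate x (istar G)))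

/-! ## The Fourier transform -/

/-- `[n] = n/2` for `n` even, `(n+1)/2` for `n` odd. -/
def nhalf (n : ℕ) : ℕ := (n + 1) / 2

/-- The classical Fourier(–Laplace) transform `f̂(ζ) = ∫ f(x) e^{−iζx} dx`. -/
def cFT (f : ℝ → ℂ) (ζ : ℂ) : ℂ := ∫ x : ℝ, f x * Complex.exp (-(Complex.I * ζ * (x : ℂ)))

/-- The family `ζ ↦ (π_ζ, dπ_ζ)` of (spin module) representations of the
Heisenberg–Clifford supergroup on `S` (basis indexed by `ι`), as morphisms of `U(hc)`
into `H = End(S)`: `dπ_ζ` is multiplicative, unital, sends the central element `z` to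
`iζ`, is ℝ-linear, and its entries are polynomial in `ζ` (cf. the explicit spin
matrices `dπ_ζ(v) = e^{iπ/4} c_ζ(v)`). -/
structure IsRepFam (n : ℕ) (ι : Type*) [Fintype ι] [DecidableEq ι]
    (dπ : ℂ → UHC n → Matrix ι ι ℂ) : Prop where
  add : ∀ ζ u v, dπ ζ (u + v) = dπ ζ u + dπ ζ v
  mul : ∀ ζ u v, dπ ζ (u * v) = dπ ζ u * dπ ζ v
  one : ∀ ζ, dπ ζ 1 = 1
  central : ∀ ζ, dπ ζ (zU n) = (Complex.I * ζ) • (1 : Matrix ι ι ℂ)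
  const : ∀ ζ (r : ℝ),
    dπ ζ (algebraMap (Polynomial ℝ) (UHC n) (Polynomial.C r)) = (r : ℂ) • (1 : Matrix ι ι ℂ)
  entryPoly : ∀ (u : UHC n) (s t : ι), ∃ p : Polynomial ℂ, ∀ ζ, dπ ζ u s t = p.eval ζ

/-- The `H`-valued superfunction `π_{−ζ}`, `π_{−ζ}(a_I; x) = e^{−iζx} dπ_{−ζ}(a_I)`. -/
def piV {n : ℕ} {ι : Type*} [Fintype ι] [DecidableEq ι]
    (dπ : ℂ → UHC n → Matrix ι ι ℂ) (ζ : ℂ) : Finset (Fin n) → ℝ → Matrix ι ι ℂ :=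
  fun I x => Complex.exp (-(Complex.I * ζ * (x : ℂ))) • dπ (-ζ) (aProd n I)

/-- The Fourier transform `F̂(ζ) = ∫_HC F · π_{−ζ} ∈ H`: the Berezin integral of the
`γ`-component of the product of `F` with the (even) `H`-valued superfunction `π_{−ζ}`.
Since `π_{−ζ}` is even, the `γ`-component of `F · π_{−ζ}` is
`∑_I (−1)^{inv(I,Iᶜ)} F(a_I; x) π_{−ζ}(a_{Iᶜ}; x)`, the sign being the shuffle sign of `Δ(γ)`. -/
def Fhat {n : ℕ} {ι : Type*} [Fintype ι] [DecidableEq ι]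
    (dπ : ℂ → UHC n → Matrix ι ι ℂ) (F : SF n) (ζ : ℂ) : Matrix ι ι ℂ :=
  Matrix.of fun s t => ∫ x : ℝ,
    (∑ I : Finset (Fin n), (((-1 : ℂ) ^ invCount I Iᶜ) * F I x) • piV dπ ζ Iᶜ x) s t


/-! ## Auxiliary lemmas -/

section Aux

open MeasureTheory

lemma invCount_eq_sum' {n : ℕ} (I J : Finset (Fin n)) :
    invCount I J = ∑ i ∈ I, (J.filter (· < i)).card := by
  unfold invCount
  rw [Finset.card_filter, Finset.sum_product]
  simp only [Finset.card_filter]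

lemma invCount_univ' {n : ℕ} (I : Finset (Fin n)) :
    invCount I (Finset.univ : Finset (Fin n)) = ∑ i ∈ I, (i : ℕ) := by
  rw [invCount_eq_sum']
  refine Finset.sum_congr rfl fun i _ => ?_
  have : (Finset.univ.filter (· < i)) = Finset.Iio i := by ext; simp
  rw [this, Fin.card_Iio]

lemma invCount_self' {n : ℕ} (I : Finset (Fin n)) :
    invCount I I = (I.card).choose 2 := by
  rw [invCount_eq_sum']
  induction I using Finset.induction_on_max with
  | empty => simp
  | insert a s ha ih =>
    have has : a ∉ s := fun h => lt_irrefl a (ha a h)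
    rw [Finset.sum_insert has, Finset.card_insert_of_notMem has]
    have h1 : ((insert a s).filter (· < a)) = s := by
      ext x
      simp only [Finset.mem_filter, Finset.mem_insert]
      constructor
      · rintro ⟨h | h, hlt⟩
        · exact absurd hlt (by simp [h])
        · exact h
      · exact fun h => ⟨Or.inr h, ha x h⟩
    have h2 : ∀ i ∈ s, ((insert a s).filter (· < i)) = s.filter (· < i) := by
      intro i hi
      ext x
      simp only [Finset.mem_filter, Finset.mem_insert]
      constructor
      · rintro ⟨h | h, hlt⟩
        · exact absurd (hlt.trans (ha i hi)) (by simp [h])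
        · exact ⟨h, hlt⟩
      · exact fun ⟨h, hlt⟩ => ⟨Or.inr h, hlt⟩
    rw [h1, Finset.sum_congr rfl fun i hi => by rw [h2 i hi], ih]
    rw [Nat.choose_succ_succ, Nat.choose_one_right, Nat.add_comm]

lemma invCount_compl' {n : ℕ} (I : Finset (Fin n)) :
    invCount I Iᶜ + (I.card).choose 2 = ∑ i ∈ I, (i : ℕ) := by
  rw [← invCount_self' I, ← invCount_univ' I]
  unfold invCount
  have hu : Iᶜ ∪ I = (Finset.univ : Finset (Fin n)) := by
    ext x; simpa using Or.symm (em _)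
  rw [← Finset.card_union_of_disjoint, ← Finset.filter_union, ← Finset.product_union, hu]
  have hd : Disjoint (I ×ˢ Iᶜ) (I ×ˢ I) :=
    Finset.disjoint_product.mpr (Or.inr (disjoint_compl_left))
  exact hd.mono (Finset.filter_subset _ _) (Finset.filter_subset _ _)

lemma neg_one_pow_invCount_compl {n : ℕ} (I : Finset (Fin n)) :
    ((-1 : ℂ) ^ invCount I Iᶜ) = (sgnSigma I : ℂ) := by
  have h := invCount_compl' I
  have he : ∑ i ∈ I, (i : ℕ) + (I.card).choose 2
      = invCount I Iᶜ + 2 * (I.card).choose 2 := by omega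
  unfold sgnSigma
  push_cast
  rw [he, pow_add, pow_mul, neg_one_sq, one_pow, mul_one]

lemma integrable_mul_exp' {f : ℝ → ℂ} (hf : Continuous f) (hcs : HasCompactSupport f) (ζ : ℂ) :
    MeasureTheory.Integrable (fun x : ℝ => f x * Complex.exp (-(Complex.I * ζ * (x : ℂ)))) := by
  apply Continuous.integrable_of_hasCompactSupport
  · exact hf.mul (by continuity)
  · exact hcs.mul_right

lemma norm_cexp_aux' (ζ : ℂ) (x : ℝ) :
    ‖Complex.exp (-(Complex.I * ζ * (x : ℂ)))‖ = Real.exp (ζ.im * x) := by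
  rw [Complex.norm_exp]
  congr 1
  simp [Complex.mul_re, Complex.mul_im]

lemma cFT_hasDerivAt' {f : ℝ → ℂ} (hf : Continuous f) (hcs : HasCompactSupport f) (ζ0 : ℂ) :
    HasDerivAt (cFT f)
      (∫ x : ℝ, f x * (Complex.exp (-(Complex.I * ζ0 * (x : ℂ))) * (-(Complex.I * (x : ℂ))))) ζ0 := by
  set F : ℂ → ℝ → ℂ := fun ζ x => f x * Complex.exp (-(Complex.I * ζ * (x : ℂ)))
  set F' : ℂ → ℝ → ℂ := fun ζ x =>
    f x * (Complex.exp (-(Complex.I * ζ * (x : ℂ))) * (-(Complex.I * (x : ℂ))))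
  set bound : ℝ → ℝ := fun x => ‖f x‖ * (Real.exp (ζ0.im * x + |x|) * |x|)
  have key := hasDerivAt_integral_of_dominated_loc_of_deriv_le (F := F) (F' := F')
    (x₀ := ζ0) (bound := bound) (μ := volume) (s := Metric.ball ζ0 1) (Metric.ball_mem_nhds ζ0 one_pos)
    (Filter.Eventually.of_forall fun ζ =>
      ((hf.mul (by continuity)).aestronglyMeasurable))
    (integrable_mul_exp' hf hcs ζ0)
    ((hf.mul (by continuity)).aestronglyMeasurable)
    (ae_of_all _ fun x ζ hζ => ?_)
    ?_
    (ae_of_all _ fun x ζ hζ => ?_)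
  · exact key.2
  · -- norm bound
    simp only [F', bound, norm_mul]
    gcongr ?_ * (?_ * ?_) <;> try rfl
    · rw [norm_cexp_aux']
      apply Real.exp_le_exp.mpr
      have h1 : |ζ.im - ζ0.im| ≤ 1 := by
        calc |ζ.im - ζ0.im| = |(ζ - ζ0).im| := by simp [Complex.sub_im]
        _ ≤ ‖ζ - ζ0‖ := Complex.abs_im_le_norm _
        _ ≤ 1 := by
            rw [← Complex.dist_eq]
            exact le_of_lt (Metric.mem_ball.mp hζ)
      nlinarith [abs_nonneg x, le_abs_self x, neg_abs_le x, le_abs_self (ζ.im - ζ0.im),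
        neg_abs_le (ζ.im - ζ0.im), abs_nonneg (ζ.im - ζ0.im)]
    · rw [norm_neg, norm_mul, Complex.norm_I, one_mul, Complex.norm_real, Real.norm_eq_abs]
  · -- bound integrable
    apply Continuous.integrable_of_hasCompactSupport
    · exact (hf.norm.mul ((by continuity : Continuous fun x : ℝ =>
        Real.exp (ζ0.im * x + |x|)).mul continuous_abs))
    · exact (hcs.norm).mul_right
  · -- HasDerivAt in ζ
    have h1 : ∀ ζ : ℂ, -(Complex.I * ζ * (x:ℂ)) = ζ * (-(Complex.I * (x : ℂ))) := fun ζ => by ring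
    simp only [F, F', h1]
    have := (((hasDerivAt_id ζ).mul_const (-(Complex.I * (x:ℂ)))).cexp).const_mul (f x)
    simpa using this

end Aux

/-- The Fourier transform `F̂(ζ) = ∫_HC F · π_{−ζ}` of a compactly
supported smooth superfunction `F` on `HC` is given in components by
`F̂(ζ) = ∑_i (F(γ_i^{(1)}))^∧(ζ) dπ_{−ζ}(γ_i^{(2)}) = ∑_I (F(a_I))^∧(ζ) dπ_{−ζ}(*a_I)`,
where `(·)^∧` is the classical Fourier transform on `ℝ`; in particular `F̂` extends to
an entire `H`-valued function on `ℂ`. -/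
theorem fourier_transform_components (n : ℕ) (ι : Type*) [Fintype ι] [DecidableEq ι]
    (dπ : ℂ → UHC n → Matrix ι ι ℂ) (hdπ : IsRepFam n ι dπ)
    (F : SF n) (hs : SFSmooth F) (hc : SFCompact F) :
    (∀ ζ : ℂ, Fhat dπ F ζ
        = ∑ I : Finset (Fin n), cFT (F I) ζ • ((sgnSigma I : ℂ) • dπ (-ζ) (aProd n Iᶜ))) ∧
      ∀ s t : ι, Differentiable ℂ fun ζ => Fhat dπ F ζ s t := by
  have hmain : ∀ ζ : ℂ, Fhat dπ F ζ
      = ∑ I : Finset (Fin n), cFT (F I) ζ • ((sgnSigma I : ℂ) • dπ (-ζ) (aProd n Iᶜ)) := by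
    intro ζ
    ext s t
    have hint : ∀ I : Finset (Fin n), MeasureTheory.Integrable (fun x : ℝ =>
        (((-1 : ℂ) ^ invCount I Iᶜ) * F I x) *
          (Complex.exp (-(Complex.I * ζ * (x : ℂ))) * dπ (-ζ) (aProd n Iᶜ) s t)) := by
      intro I
      have heq : (fun x : ℝ =>
          (((-1 : ℂ) ^ invCount I Iᶜ) * F I x) *
            (Complex.exp (-(Complex.I * ζ * (x : ℂ))) * dπ (-ζ) (aProd n Iᶜ) s t))
          = fun x : ℝ => (F I x * Complex.exp (-(Complex.I * ζ * (x : ℂ)))) *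
              (((-1 : ℂ) ^ invCount I Iᶜ) * dπ (-ζ) (aProd n Iᶜ) s t) := by
        funext x; ring
      rw [heq]
      exact (integrable_mul_exp' (hs I).continuous (hc I) ζ).mul_const _
    have hL : Fhat dπ F ζ s t = ∑ I : Finset (Fin n),
        ∫ x : ℝ, (((-1 : ℂ) ^ invCount I Iᶜ) * F I x) *
          (Complex.exp (-(Complex.I * ζ * (x : ℂ))) * dπ (-ζ) (aProd n Iᶜ) s t) := by
      show (∫ x : ℝ, (∑ I : Finset (Fin n),
        (((-1 : ℂ) ^ invCount I Iᶜ) * F I x) • piV dπ ζ Iᶜ x) s t) = _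
      rw [← MeasureTheory.integral_finset_sum _ fun I _ => hint I]
      congr 1
      funext x
      simp [piV, Matrix.sum_apply, Matrix.smul_apply, smul_eq_mul, mul_assoc]
    rw [hL]
    rw [Matrix.sum_apply]
    refine Finset.sum_congr rfl fun I _ => ?_
    have heq : (fun x : ℝ =>
        (((-1 : ℂ) ^ invCount I Iᶜ) * F I x) *
          (Complex.exp (-(Complex.I * ζ * (x : ℂ))) * dπ (-ζ) (aProd n Iᶜ) s t))
        = fun x : ℝ => (F I x * Complex.exp (-(Complex.I * ζ * (x : ℂ)))) *
            (((-1 : ℂ) ^ invCount I Iᶜ) * dπ (-ζ) (aProd n Iᶜ) s t) := by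
      funext x; ring
    rw [heq, MeasureTheory.integral_mul_const, neg_one_pow_invCount_compl]
    simp [cFT, Matrix.smul_apply, smul_eq_mul, mul_assoc]
  refine ⟨hmain, fun s t => ?_⟩
  have hfun : (fun ζ => Fhat dπ F ζ s t) = fun ζ => ∑ I : Finset (Fin n),
      cFT (F I) ζ * ((sgnSigma I : ℂ) * dπ (-ζ) (aProd n Iᶜ) s t) := by
    funext ζ
    rw [hmain ζ, Matrix.sum_apply]
    simp [Matrix.smul_apply, smul_eq_mul]
  rw [hfun]
  apply Differentiable.fun_sum
  intro I _
  apply Differentiable.mul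
  · exact fun ζ0 => (cFT_hasDerivAt' (hs I).continuous (hc I) ζ0).differentiableAt
  · obtain ⟨p, hp⟩ := hdπ.entryPoly (aProd n Iᶜ) s t
    have : (fun ζ : ℂ => (sgnSigma I : ℂ) * dπ (-ζ) (aProd n Iᶜ) s t)
        = fun ζ : ℂ => (sgnSigma I : ℂ) * p.eval (-ζ) := by
      funext ζ; rw [hp]
    rw [this]
    exact ((p.differentiable.comp differentiable_id.neg)).const_mul _
end
end

section
/- Fourier inversion on HC: for every compactly supported smooth superfunction F, F(1;x) = (1/2π) ∫_ℝ T(F̂(ζ)) (−2ζ)^{−[n]} e^{ixζ} dζ, where [n] = n/2 for n even and (n+1)/2 for n odd. -/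
noncomputable section

open CliffordAlgebra

section FourierAux

open MeasureTheory FourierTransform Real

lemma aux_integrable_mul_exp {f : ℝ → ℂ} (hf : Continuous f) (hsupp : HasCompactSupport f)
    (ζ : ℂ) :
    Integrable (fun y : ℝ => f y * Complex.exp (-(Complex.I * ζ * (y : ℂ)))) := by
  apply Continuous.integrable_of_hasCompactSupport
  · exact hf.mul (Complex.continuous_exp.comp (by fun_prop))
  · exact hsupp.mul_right

lemma aux_invCount_empty {n : ℕ} (J : Finset (Fin n)) : invCount (∅ : Finset (Fin n)) J = 0 := by
  simp [invCount]

lemma aux_integrable_fourier {f : ℝ → ℂ} (hf : ContDiff ℝ (⊤ : ℕ∞) f)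
    (hsupp : HasCompactSupport f) : Integrable (𝓕 f) := by
  have hfi : Integrable f := hf.continuous.integrable_of_hasCompactSupport hsupp
  have h'f : ∀ (k m : ℕ), (k : ℕ∞) ≤ (0 : ℕ∞) → (m : ℕ∞) ≤ (⊤ : ℕ∞) →
      Integrable (fun v : ℝ => ‖v‖ ^ k * ‖iteratedFDeriv ℝ m f v‖) := by
    intro k m _ _
    apply Continuous.integrable_of_hasCompactSupport
    · exact (continuous_norm.pow k).mul (hf.continuous_iteratedFDeriv (by exact_mod_cast le_top)).norm
    · exact ((hsupp.iteratedFDeriv m).norm).mul_left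
  have hf' : ContDiff ℝ ((⊤ : ℕ∞) : WithTop ℕ∞) f := hf.of_le (by simp)
  have hb0 := Real.pow_mul_norm_iteratedFDeriv_fourier_le (K := 0) (N := ⊤)
    hf' h'f (k := 0) (n := 0) le_rfl le_top
  have hb2 := Real.pow_mul_norm_iteratedFDeriv_fourier_le (K := 0) (N := ⊤)
    hf' h'f (k := 0) (n := 2) le_rfl le_top
  set C0 : ℝ := (2 * π) ^ 0 * (2 * (0:ℕ) + 2) ^ 0 *
      ∑ p ∈ Finset.range (0 + 1) ×ˢ Finset.range (0 + 1),
        ∫ v : ℝ, ‖v‖ ^ p.1 * ‖iteratedFDeriv ℝ p.2 f v‖ with hC0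
  set C2 : ℝ := (2 * π) ^ 0 * (2 * (0:ℕ) + 2) ^ 2 *
      ∑ p ∈ Finset.range (0 + 1) ×ˢ Finset.range (2 + 1),
        ∫ v : ℝ, ‖v‖ ^ p.1 * ‖iteratedFDeriv ℝ p.2 f v‖ with hC2
  have hbound : ∀ w : ℝ, ‖𝓕 f w‖ ≤ (C0 + C2) * (1 + w ^ 2)⁻¹ := by
    intro w
    have h0 : ‖𝓕 f w‖ ≤ C0 := by
      have := hb0 w
      simpa [norm_iteratedFDeriv_zero] using this
    have h2 : w ^ 2 * ‖𝓕 f w‖ ≤ C2 := by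
      have := hb2 w
      simpa [norm_iteratedFDeriv_zero, Real.norm_eq_abs, sq_abs] using this
    have hpos : (0 : ℝ) < 1 + w ^ 2 := by positivity
    rw [← div_eq_mul_inv, le_div_iff₀ hpos]
    calc ‖𝓕 f w‖ * (1 + w ^ 2) = ‖𝓕 f w‖ + w ^ 2 * ‖𝓕 f w‖ := by ring
    _ ≤ C0 + C2 := add_le_add h0 h2
  apply Integrable.mono' (integrable_inv_one_add_sq.const_mul (C0 + C2))
  · exact (VectorFourier.fourierIntegral_continuous Real.continuous_fourierChar
      (by exact continuous_inner) hfi).aestronglyMeasurable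
  · filter_upwards with w using hbound w

/-- Computation of `T (F̂(ζ))`. -/
lemma aux_T_Fhat {n : ℕ} {ι : Type*} [Fintype ι] [DecidableEq ι]
    (dπ : ℂ → UHC n → Matrix ι ι ℂ)
    (T : Matrix ι ι ℂ →ₗ[ℂ] ℂ)
    (hTγ : ∀ ζ : ℂ, T (dπ ζ (gammaU n)) = (2 * ζ) ^ nhalf n)
    (hT0 : ∀ (ζ : ℂ) (I : Finset (Fin n)), I ≠ Finset.univ → T (dπ ζ (aProd n I)) = 0)
    (F : SF n) (hs : SFSmooth F) (hc : SFCompact F) (ζ : ℂ) :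
    T (Fhat dπ F ζ) =
      (∫ y : ℝ, F ∅ y * Complex.exp (-(Complex.I * ζ * (y : ℂ)))) * (2 * (-ζ)) ^ nhalf n := by
  have hint : ∀ I : Finset (Fin n), ∀ c : ℂ,
      Integrable (fun y : ℝ => (c * F I y) * Complex.exp (-(Complex.I * ζ * (y : ℂ)))) := by
    intro I c
    have := (aux_integrable_mul_exp (hs I).continuous (hc I) ζ).const_mul c
    simpa [mul_assoc] using this
  have key : Fhat dπ F ζ = ∑ I : Finset (Fin n),
      (∫ y : ℝ, (((-1 : ℂ) ^ invCount I Iᶜ * F I y) *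
        Complex.exp (-(Complex.I * ζ * (y : ℂ))))) • dπ (-ζ) (aProd n Iᶜ) := by
    ext s t
    have hptwise : ∀ y : ℝ,
        (∑ I : Finset (Fin n), (((-1 : ℂ) ^ invCount I Iᶜ) * F I y) • piV dπ ζ Iᶜ y) s t
        = ∑ I : Finset (Fin n), (((-1 : ℂ) ^ invCount I Iᶜ * F I y) *
            Complex.exp (-(Complex.I * ζ * (y : ℂ)))) * dπ (-ζ) (aProd n Iᶜ) s t := by
      intro y
      rw [Matrix.sum_apply]
      refine Finset.sum_congr rfl fun I _ => ?_
      simp only [piV, Matrix.smul_apply, smul_eq_mul]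
      ring
    show (∫ y : ℝ, (∑ I : Finset (Fin n),
        (((-1 : ℂ) ^ invCount I Iᶜ) * F I y) • piV dπ ζ Iᶜ y) s t)
      = (∑ I : Finset (Fin n), (∫ y : ℝ, (((-1 : ℂ) ^ invCount I Iᶜ * F I y) *
          Complex.exp (-(Complex.I * ζ * (y : ℂ))))) • dπ (-ζ) (aProd n Iᶜ)) s t
    rw [Matrix.sum_apply]
    simp_rw [hptwise, Matrix.smul_apply, smul_eq_mul]
    rw [MeasureTheory.integral_finset_sum _ (fun I _ => (hint I _).mul_const _)]
    exact Finset.sum_congr rfl fun I _ => (MeasureTheory.integral_mul_const _ _)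
  rw [key, map_sum]
  rw [Finset.sum_eq_single (∅ : Finset (Fin n))]
  · rw [T.map_smul, smul_eq_mul]
    have h1 : (∅ : Finset (Fin n))ᶜ = Finset.univ := by simp
    rw [h1]
    have h2 : T (dπ (-ζ) (aProd n Finset.univ)) = (2 * (-ζ)) ^ nhalf n := hTγ (-ζ)
    rw [h2]
    congr 1
    refine integral_congr_ae (Filter.Eventually.of_forall fun y => ?_)
    rw [aux_invCount_empty]
    ring
  · intro I _ hI
    rw [T.map_smul, smul_eq_mul, hT0 (-ζ) Iᶜ (by
      intro h
      exact hI ((Finset.compl_eq_univ_iff I).mp h)), mul_zero]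
  · intro h
    exact absurd (Finset.mem_univ _) h

end FourierAux

/-- Fourier inversion on `HC`: for every compactly supported smooth
superfunction `F`,
`F(1; x) = (1/2π) ∫_ℝ T(F̂(ζ)) (−2ζ)^{−[n]} e^{ixζ} dζ`, where `T` is the normalized
(super)trace on `H` (characterized by `T(dπ_ζ(γ)) = (2ζ)^{[n]}` and `T(dπ_ζ(a_I)) = 0`
for proper `I`), and `[n] = n/2` for even `n`, `(n+1)/2` for odd `n`. -/
theorem fourier_inversion (n : ℕ) (ι : Type*) [Fintype ι] [DecidableEq ι]
    (dπ : ℂ → UHC n → Matrix ι ι ℂ) (hdπ : IsRepFam n ι dπ)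
    (T : Matrix ι ι ℂ →ₗ[ℂ] ℂ)
    (hTγ : ∀ ζ : ℂ, T (dπ ζ (gammaU n)) = (2 * ζ) ^ nhalf n)
    (hT0 : ∀ (ζ : ℂ) (I : Finset (Fin n)), I ≠ Finset.univ → T (dπ ζ (aProd n I)) = 0)
    (F : SF n) (hs : SFSmooth F) (hc : SFCompact F) (x : ℝ) :
    F ∅ x = ((2 * Real.pi : ℂ))⁻¹ *
      ∫ ζ : ℝ, T (Fhat dπ F ζ) * ((-2 * (ζ : ℂ)) ^ (-(nhalf n : ℤ)))
        * Complex.exp (Complex.I * x * ζ) := by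
  classical
  set f : ℝ → ℂ := F ∅ with hfdef
  have hfc : Continuous f := (hs ∅).continuous
  have hfs : HasCompactSupport f := hc ∅
  have hfi : MeasureTheory.Integrable f := hfc.integrable_of_hasCompactSupport hfs
  have hF : MeasureTheory.Integrable (FourierTransform.fourier f) :=
    aux_integrable_fourier (hs ∅) hfs
  have hπ : (2 * Real.pi) ≠ 0 := by positivity
  have hT : ∀ ζ : ℂ, T (Fhat dπ F ζ) =
      (∫ y : ℝ, f y * Complex.exp (-(Complex.I * ζ * (y : ℂ)))) * (2 * (-ζ)) ^ nhalf n :=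
    aux_T_Fhat dπ T hTγ hT0 F hs hc
  have h𝓕 : ∀ ζ : ℝ, (∫ y : ℝ, f y * Complex.exp (-(Complex.I * (ζ : ℂ) * (y : ℂ))))
      = FourierTransform.fourier f (ζ / (2 * Real.pi)) := by
    intro ζ
    rw [Real.fourier_eq']
    refine MeasureTheory.integral_congr_ae (Filter.Eventually.of_forall fun y => ?_)
    simp only [smul_eq_mul]
    rw [mul_comm]
    congr 1
    rw [show (inner ℝ y (ζ / (2 * Real.pi)) : ℝ) = y * (ζ / (2 * Real.pi)) by
      simp [RCLike.inner_apply]; ring]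
    rw [show -2 * Real.pi * (y * (ζ / (2 * Real.pi))) = -(y * ζ) by
      field_simp]
    push_cast
    ring
  have hae : (fun ζ : ℝ => T (Fhat dπ F ζ) * ((-2 * (ζ : ℂ)) ^ (-(nhalf n : ℤ)))
        * Complex.exp (Complex.I * x * ζ))
      =ᵐ[MeasureTheory.volume]
      (fun ζ : ℝ => FourierTransform.fourier f (ζ / (2 * Real.pi))
        * Complex.exp (Complex.I * x * ζ)) := by
    have h0 : ({(0 : ℝ)} : Set ℝ)ᶜ ∈ MeasureTheory.ae MeasureTheory.volume :=
      MeasureTheory.compl_mem_ae_iff.mpr Real.volume_singleton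
    filter_upwards [h0] with ζ hζ
    have hζ0 : (ζ : ℝ) ≠ 0 := by simpa using hζ
    have hc2 : (-2 * (ζ : ℂ)) ≠ 0 := by
      simp [hζ0]
    have hck : (-2 * (ζ : ℂ)) ^ nhalf n ≠ 0 := pow_ne_zero _ hc2
    rw [hT ζ, h𝓕 ζ]
    rw [show ((2 : ℂ) * (-(ζ : ℂ))) ^ nhalf n = (-2 * (ζ : ℂ)) ^ nhalf n by ring_nf]
    rw [zpow_neg, zpow_natCast, mul_inv_cancel_right₀ hck]
  rw [MeasureTheory.integral_congr_ae hae]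
  have hinv : FourierTransform.fourierInv (FourierTransform.fourier f) x = f x := by
    rw [hfc.fourierInv_fourier_eq hfi hF]
  have hcv := MeasureTheory.Measure.integral_comp_mul_left
    (fun ζ : ℝ => FourierTransform.fourier f (ζ / (2 * Real.pi))
      * Complex.exp (Complex.I * x * ζ)) (2 * Real.pi)
  have heq : (∫ ζ : ℝ, FourierTransform.fourier f ((2 * Real.pi * ζ) / (2 * Real.pi))
      * Complex.exp (Complex.I * x * ((2 * Real.pi * ζ : ℝ) : ℂ))) = f x := by
    rw [← hinv, Real.fourierInv_eq']
    refine MeasureTheory.integral_congr_ae (Filter.Eventually.of_forall fun ζ => ?_)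
    simp only [smul_eq_mul]
    rw [mul_comm]
    have harg : (2 * Real.pi * ζ) / (2 * Real.pi) = ζ := by field_simp
    rw [harg]
    congr 1
    rw [show (inner ℝ ζ x : ℝ) = ζ * x by simp [RCLike.inner_apply]; ring]
    push_cast
    ring
  rw [heq] at hcv
  have habs : |(2 * Real.pi)⁻¹| = (2 * Real.pi)⁻¹ := by
    rw [abs_of_pos]; positivity
  rw [habs] at hcv
  have hfin : (∫ ζ : ℝ, FourierTransform.fourier f (ζ / (2 * Real.pi))
      * Complex.exp (Complex.I * x * ζ)) = (2 * Real.pi : ℝ) • f x := by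
    have := congrArg (fun z : ℂ => (2 * Real.pi : ℝ) • z) hcv.symm
    simp only [smul_smul, mul_inv_cancel₀ hπ, one_smul] at this
    exact this
  rw [hfin, Complex.real_smul]
  push_cast
  field_simp
end
end

section
/- An H-valued function A : ℝ → H is of Schwartz class (i.e., all derivatives of all components A(u;ζ) = ⟨A(ζ) | dπ_{−ζ}(u)⟩(−2ζ)^{−[n]} are bounded) if and only if for every u ∈ U(hc) the function ζ ↦ A(u;ζ) belongs to the classical Schwartz space S(ℝ). -/
noncomputable section

open CliffordAlgebra

/-! ## Schwartz class `H`-valued functions -/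

/-- The super adjoint `A ↦ A^†` on `H = End(S)` (a conjugate-linear map). -/
structure IsDagger (ι : Type*) [Fintype ι] [DecidableEq ι]
    (dag : Matrix ι ι ℂ → Matrix ι ι ℂ) : Prop where
  add : ∀ M N, dag (M + N) = dag M + dag N
  smul : ∀ (c : ℂ) M, dag (c • M) = (starRingEnd ℂ c) • dag M

/-- The components `A(u; ζ) = ⟨A(ζ) | dπ_{−ζ}(u)⟩ (−2ζ)^{−[n]}` of an `H`-valued
function on `ℝ`, where `⟨A | B⟩ = T(A B^†)`. -/
def Acomp {n : ℕ} {ι : Type*} [Fintype ι] [DecidableEq ι]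
    (T : Matrix ι ι ℂ →ₗ[ℂ] ℂ) (dag : Matrix ι ι ℂ → Matrix ι ι ℂ)
    (dπ : ℂ → UHC n → Matrix ι ι ℂ) (A : ℝ → Matrix ι ι ℂ) (u : UHC n) : ℝ → ℂ :=
  fun ζ => T (A ζ * dag (dπ (-(ζ : ℂ)) u)) * ((-2 * (ζ : ℂ)) ^ (-(nhalf n : ℤ)))

/-- Membership in the classical Schwartz space `S(ℝ)`. -/
def IsSchwartzFn (f : ℝ → ℂ) : Prop :=
  ContDiff ℝ (⊤ : ℕ∞) f ∧ ∀ j k : ℕ, ∃ C : ℝ, ∀ x : ℝ, |x| ^ j * ‖iteratedDeriv k f x‖ ≤ C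

/-- An `H`-valued function `A : ℝ → H` is of Schwartz class if all components
`A(u; ·)`, `u ∈ U(hc)`, are smooth with all derivatives bounded. -/
def SchwartzClassA {n : ℕ} {ι : Type*} [Fintype ι] [DecidableEq ι]
    (T : Matrix ι ι ℂ →ₗ[ℂ] ℂ) (dag : Matrix ι ι ℂ → Matrix ι ι ℂ)
    (dπ : ℂ → UHC n → Matrix ι ι ℂ) (A : ℝ → Matrix ι ι ℂ) : Prop :=
  ∀ (u : UHC n) (k : ℕ), ContDiff ℝ (⊤ : ℕ∞) (Acomp T dag dπ A u) ∧
    ∃ C : ℝ, ∀ ζ : ℝ, ‖iteratedDeriv k (Acomp T dag dπ A u) ζ‖ ≤ C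


lemma derivIMul (g : ℝ → ℂ) (hg : Differentiable ℝ g) (x : ℝ) :
    HasDerivAt (fun x : ℝ => (Complex.I * x) * g x)
      (Complex.I * x * deriv g x + Complex.I * g x) x := by
  have h1 : HasDerivAt (fun x : ℝ => Complex.I * (x:ℂ)) Complex.I x := by
    simpa using (Complex.ofRealCLM.hasDerivAt (x := x)).const_mul Complex.I
  have h2 := h1.mul (hg x).hasDerivAt
  exact h2.congr_deriv (by ring)

lemma iter_IMul (g : ℝ → ℂ) (hg : ContDiff ℝ (⊤ : ℕ∞) g) (k : ℕ) :
    ∀ x, iteratedDeriv (k+1) (fun x : ℝ => (Complex.I * x) * g x) x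
      = Complex.I * x * iteratedDeriv (k+1) g x + ((k:ℂ)+1) * Complex.I * iteratedDeriv k g x := by
  induction k with
  | zero =>
    intro x
    rw [iteratedDeriv_one, (derivIMul g (hg.differentiable (by simp)) x).deriv,
      iteratedDeriv_one, iteratedDeriv_zero]
    ring
  | succ k ih =>
    intro x
    rw [iteratedDeriv_succ]
    have hfun : iteratedDeriv (k+1) (fun x : ℝ => (Complex.I * x) * g x)
        = fun x : ℝ => Complex.I * x * iteratedDeriv (k+1) g x + ((k:ℂ)+1) * Complex.I * iteratedDeriv k g x :=
      funext ih
    rw [hfun]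
    have d1 : Differentiable ℝ (iteratedDeriv (k+1) g) :=
      hg.differentiable_iteratedDeriv (k+1) (by exact_mod_cast WithTop.coe_lt_top _)
    have d0 : Differentiable ℝ (iteratedDeriv k g) :=
      hg.differentiable_iteratedDeriv k (by exact_mod_cast WithTop.coe_lt_top _)
    have h1 := derivIMul (iteratedDeriv (k+1) g) d1 x
    have h2 := ((d0 x).hasDerivAt).const_mul (((k:ℂ)+1) * Complex.I)
    have h3 := h1.add h2
    rw [(show HasDerivAt (fun x : ℝ => Complex.I * x * iteratedDeriv (k+1) g x + ((k:ℂ)+1) * Complex.I * iteratedDeriv k g x) _ x from h3).deriv]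
    rw [← iteratedDeriv_succ, ← iteratedDeriv_succ]
    push_cast
    ring

lemma Acomp_zmul {n : ℕ} {ι : Type*} [Fintype ι] [DecidableEq ι]
    {dπ : ℂ → UHC n → Matrix ι ι ℂ} (hdπ : IsRepFam n ι dπ)
    (T : Matrix ι ι ℂ →ₗ[ℂ] ℂ) {dag : Matrix ι ι ℂ → Matrix ι ι ℂ}
    (hdag : IsDagger ι dag) (A : ℝ → Matrix ι ι ℂ) (v : UHC n) (ζ : ℝ) :
    Acomp T dag dπ A (zU n * v) ζ = (Complex.I * ζ) * Acomp T dag dπ A v ζ := by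
  unfold Acomp
  rw [hdπ.mul, hdπ.central, smul_mul_assoc, one_mul, hdag.smul, mul_smul_comm,
    map_smul, smul_eq_mul]
  have h : (starRingEnd ℂ) (Complex.I * -(ζ:ℂ)) = Complex.I * ζ := by
    simp [map_mul, map_neg, Complex.conj_I, Complex.conj_ofReal]
  rw [h]
  ring

lemma Acomp_zpow {n : ℕ} {ι : Type*} [Fintype ι] [DecidableEq ι]
    {dπ : ℂ → UHC n → Matrix ι ι ℂ} (hdπ : IsRepFam n ι dπ)
    (T : Matrix ι ι ℂ →ₗ[ℂ] ℂ) {dag : Matrix ι ι ℂ → Matrix ι ι ℂ}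
    (hdag : IsDagger ι dag) (A : ℝ → Matrix ι ι ℂ) (v : UHC n) (m : ℕ) (ζ : ℝ) :
    Acomp T dag dπ A (zU n ^ m * v) ζ = (Complex.I * ζ) ^ m * Acomp T dag dπ A v ζ := by
  induction m generalizing v with
  | zero => simp
  | succ m ih =>
    rw [pow_succ, mul_assoc, ih (zU n * v), Acomp_zmul hdπ T hdag A v ζ, pow_succ]
    ring

/-- An `H`-valued function `A : ℝ → H` is of Schwartz class (all
derivatives of all components `A(u; ζ) = ⟨A(ζ) | dπ_{−ζ}(u)⟩(−2ζ)^{−[n]}` exist and are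
bounded) if and only if for every `u ∈ U(hc)` the function `ζ ↦ A(u; ζ)` belongs to the
classical Schwartz space `S(ℝ)`. -/
theorem schwartz_class_components (n : ℕ) (ι : Type*) [Fintype ι] [DecidableEq ι]
    (dπ : ℂ → UHC n → Matrix ι ι ℂ) (hdπ : IsRepFam n ι dπ)
    (T : Matrix ι ι ℂ →ₗ[ℂ] ℂ) (dag : Matrix ι ι ℂ → Matrix ι ι ℂ)
    (hdag : IsDagger ι dag) (A : ℝ → Matrix ι ι ℂ) :
    SchwartzClassA T dag dπ A ↔ ∀ u : UHC n, IsSchwartzFn (Acomp T dag dπ A u) := by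
  constructor
  · intro h u
    set f := Acomp T dag dπ A u with hfdef
    have hf : ContDiff ℝ (⊤ : ℕ∞) f := (h u 0).1
    refine ⟨hf, ?_⟩
    set Φ : ℕ → ℝ → ℂ := fun m ζ => (Complex.I * ζ) ^ m * f ζ with hΦdef
    have hΦeq : ∀ m : ℕ, Acomp T dag dπ A (zU n ^ m * u) = Φ m := fun m =>
      funext fun ζ => Acomp_zpow hdπ T hdag A u m ζ
    have hΦbd : ∀ m k : ℕ, ∃ C : ℝ, ∀ ζ : ℝ, ‖iteratedDeriv k (Φ m) ζ‖ ≤ C := by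
      intro m k
      obtain ⟨C, hC⟩ := (h (zU n ^ m * u) k).2
      rw [hΦeq m] at hC
      exact ⟨C, hC⟩
    have hΦ0 : Φ 0 = f := by funext ζ; simp [hΦdef]
    have hΦsucc : ∀ m, Φ (m+1) = fun ζ : ℝ => (Complex.I * ζ) * Φ m ζ := by
      intro m; funext ζ; simp only [hΦdef, pow_succ]; ring
    have hΦsm : ∀ m, ContDiff ℝ (⊤ : ℕ∞) (Φ m) := by
      intro m; rw [← hΦeq m]; exact (h _ 0).1
    set D : ℕ → ℕ → ℝ → ℂ := fun m k ζ =>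
      (Complex.I * ζ) ^ m * iteratedDeriv k f ζ - iteratedDeriv k (Φ m) ζ with hDdef
    have hrec : ∀ m k (ζ : ℝ), iteratedDeriv (k+1) (Φ (m+1)) ζ
        = Complex.I * ζ * iteratedDeriv (k+1) (Φ m) ζ
          + ((k:ℂ)+1) * Complex.I * iteratedDeriv k (Φ m) ζ := by
      intro m k ζ
      rw [hΦsucc m]
      exact iter_IMul (Φ m) (hΦsm m) k ζ
    have W : ∀ k t m : ℕ, ∃ C : ℝ, ∀ ζ : ℝ, ‖(Complex.I * ζ) ^ t * D m k ζ‖ ≤ C := by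
      intro k
      induction k with
      | zero =>
        intro t m
        refine ⟨0, fun ζ => ?_⟩
        simp [hDdef, hΦdef, iteratedDeriv_zero]
      | succ k ihk =>
        intro t m
        induction m generalizing t with
        | zero =>
          refine ⟨0, fun ζ => ?_⟩
          simp [hDdef, hΦ0]
        | succ m ihm =>
          obtain ⟨C1, hC1⟩ := ihm (t+1)
          obtain ⟨C2, hC2⟩ := ihk 0 (t+m)
          obtain ⟨C3, hC3⟩ := hΦbd (t+m) k
          obtain ⟨C4, hC4⟩ := ihk t m
          refine ⟨C1 + ((k:ℝ)+1) * (C2 + C3 + C4), fun ζ => ?_⟩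
          have key : (Complex.I * ζ) ^ t * D (m+1) (k+1) ζ
              = (Complex.I * ζ) ^ (t+1) * D m (k+1) ζ
                - ((k:ℂ)+1) * Complex.I *
                  (D (t+m) k ζ + iteratedDeriv k (Φ (t+m)) ζ
                    - (Complex.I * ζ) ^ t * D m k ζ) := by
            simp only [hDdef]
            rw [hrec m k ζ]
            ring
          rw [key]
          have hw : ‖D (t+m) k ζ + iteratedDeriv k (Φ (t+m)) ζ
              - (Complex.I * ζ) ^ t * D m k ζ‖ ≤ C2 + C3 + C4 := by
            refine (norm_sub_le _ _).trans ?_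
            have h1 : ‖D (t+m) k ζ + iteratedDeriv k (Φ (t+m)) ζ‖ ≤ C2 + C3 := by
              refine (norm_add_le _ _).trans (add_le_add ?_ (hC3 ζ))
              simpa using hC2 ζ
            exact add_le_add h1 (hC4 ζ)
          have hcnorm : ‖((k:ℂ)+1) * Complex.I * (D (t+m) k ζ + iteratedDeriv k (Φ (t+m)) ζ
              - (Complex.I * ζ) ^ t * D m k ζ)‖
              ≤ ((k:ℝ)+1) * (C2 + C3 + C4) := by
            rw [norm_mul, norm_mul, Complex.norm_I, mul_one]
            have hk : ‖((k:ℂ)+1)‖ = (k:ℝ)+1 := by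
              have : ((k:ℂ)+1) = (((k:ℝ)+1 : ℝ) : ℂ) := by push_cast; ring
              rw [this, Complex.norm_real, Real.norm_eq_abs, abs_of_nonneg (by positivity)]
            rw [hk]
            exact mul_le_mul_of_nonneg_left hw (by positivity)
          exact (norm_sub_le _ _).trans (add_le_add (hC1 ζ) hcnorm)
    intro j k
    obtain ⟨C1, hC1⟩ := W k 0 j
    obtain ⟨C2, hC2⟩ := hΦbd j k
    refine ⟨C1 + C2, fun ζ => ?_⟩
    have hnorm : |ζ| ^ j * ‖iteratedDeriv k f ζ‖
        = ‖(Complex.I * ζ) ^ j * iteratedDeriv k f ζ‖ := by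
      rw [norm_mul, norm_pow, norm_mul, Complex.norm_I, one_mul, Complex.norm_real,
        Real.norm_eq_abs]
    rw [hnorm]
    have hsplit : (Complex.I * ζ) ^ j * iteratedDeriv k f ζ
        = D j k ζ + iteratedDeriv k (Φ j) ζ := by
      simp only [hDdef]; ring
    rw [hsplit]
    refine (norm_add_le _ _).trans (add_le_add ?_ (hC2 ζ))
    simpa using hC1 ζ
  · intro h u k
    refine ⟨(h u).1, ?_⟩
    obtain ⟨C, hC⟩ := (h u).2 0 k
    exact ⟨C, fun ζ => by simpa using hC ζ⟩
end
end
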